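/- arXiv:2003.09321 — 5 statements merged into one kernel-verified Lean document; each statement's English description precedes it below -/
import Mathlib

section
/- For all real s ≥ 1, the integral ∫_{-π}^{π} (1 - cos(2π s cos θ)) dθ is bounded below by a positive constant c independent of s. -/
/-!
Only the range `θ ∈ [π/6, π/2]` is needed, since the integrand is nonnegative. There
`θ ↦ a cos θ` has derivative of size at least `a / 2`, and one integration by parts
(a first-derivative van der Corput estimate) shows that `∫ cos (a cos θ)` over that range is
`O(1 / a)`. For `a = 2πs ≥ 2π` this leaves at least `π / 3 - 2 / π ≥ 1 / 3`.
-/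

open Real intervalIntegral Set MeasureTheory

section
variable {a α : ℝ}

lemma mul_sin_pos_of_mem_uIcc (ha : 0 < a) (hα : 0 < α) (hαπ : α ≤ π / 2) {θ : ℝ}
    (hθ : θ ∈ uIcc α (π / 2)) : 0 < a * sin θ := by
  rw [uIcc_of_le hαπ] at hθ
  exact mul_pos ha (sin_pos_of_pos_of_lt_pi (hα.trans_le hθ.1) (by linarith [hθ.2, pi_pos]))

lemma hasDerivAt_neg_inv_mul_sin {θ : ℝ} (h : a * sin θ ≠ 0) :
    HasDerivAt (fun θ => -(a * sin θ)⁻¹) (a * cos θ / (a * sin θ) ^ 2) θ :=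
  (((hasDerivAt_sin θ).const_mul a).inv h).neg.congr_deriv (by simp only [neg_div, neg_neg])

lemma intervalIntegrable_mul_cos_div_mul_sin_sq (ha : 0 < a) (hα : 0 < α) (hαπ : α ≤ π / 2) :
    IntervalIntegrable (fun θ => a * cos θ / (a * sin θ) ^ 2) volume α (π / 2) :=
  ContinuousOn.intervalIntegrable <| ContinuousOn.div (by fun_prop) (by fun_prop)
    fun _ hθ => pow_ne_zero 2 (mul_sin_pos_of_mem_uIcc ha hα hαπ hθ).ne'

lemma integral_cos_mul_cos_eq (ha : 0 < a) (hα : 0 < α) (hαπ : α ≤ π / 2) :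
    ∫ θ in α..π / 2, cos (a * cos θ) = sin (a * cos α) / (a * sin α)
      - ∫ θ in α..π / 2, a * cos θ / (a * sin θ) ^ 2 * sin (a * cos θ) := by
  have hsin := fun θ (hθ : θ ∈ uIcc α (π / 2)) => mul_sin_pos_of_mem_uIcc ha hα hαπ hθ
  have hv : ∀ θ, HasDerivAt (fun θ => sin (a * cos θ)) (cos (a * cos θ) * (a * -sin θ)) θ :=
    fun θ => (hasDerivAt_sin _).comp θ ((hasDerivAt_cos θ).const_mul a)
  have hw_int := intervalIntegrable_mul_cos_div_mul_sin_sq ha hα hαπ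
  have ibp := integral_mul_deriv_eq_deriv_mul
    (fun θ hθ => hasDerivAt_neg_inv_mul_sin (hsin θ hθ).ne') (fun θ _ => hv θ) hw_int
    (Continuous.intervalIntegrable (by fun_prop) _ _)
  have hcongr : ∫ θ in α..π / 2, cos (a * cos θ)
      = ∫ θ in α..π / 2, -(a * sin θ)⁻¹ * (cos (a * cos θ) * (a * -sin θ)) := by
    refine integral_congr fun θ hθ => ?_
    have := right_ne_zero_of_mul (hsin θ hθ).ne'
    field_simp
  rw [hcongr, ibp, cos_pi_div_two, mul_zero, sin_zero, mul_zero, zero_sub, neg_mul,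
    neg_neg, inv_mul_eq_div]

lemma abs_integral_cos_mul_cos_le (ha : 0 < a) (hα : 0 < α) (hαπ : α ≤ π / 2) :
    |∫ θ in α..π / 2, cos (a * cos θ)| ≤ 2 / (a * sin α) := by
  have hsin := fun θ (hθ : θ ∈ uIcc α (π / 2)) => mul_sin_pos_of_mem_uIcc ha hα hαπ hθ
  have hsinα := hsin α left_mem_uIcc
  have hboundary : |sin (a * cos α) / (a * sin α)| ≤ (a * sin α)⁻¹ := by
    rw [abs_div, abs_of_pos hsinα, div_eq_mul_inv]
    exact mul_le_of_le_one_left (inv_nonneg.2 hsinα.le) (abs_sin_le_one _)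
  -- the weight `a cos θ / (a sin θ)²` is nonnegative with primitive `-(a sin θ)⁻¹`
  have htail : |∫ θ in α..π / 2, a * cos θ / (a * sin θ) ^ 2 * sin (a * cos θ)|
      ≤ (a * sin α)⁻¹ := by
    have hw_int := intervalIntegrable_mul_cos_div_mul_sin_sq ha hα hαπ
    have hw_nonneg : ∀ θ ∈ Ioc α (π / 2), 0 ≤ a * cos θ / (a * sin θ) ^ 2 := fun θ hθ => by
      have := cos_nonneg_of_mem_Icc ⟨by linarith [hθ.1, pi_pos], hθ.2⟩
      positivity
    calc _ ≤ ∫ θ in α..π / 2, a * cos θ / (a * sin θ) ^ 2 := by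
          rw [← Real.norm_eq_abs]
          refine norm_integral_le_of_norm_le hαπ (ae_of_all _ fun θ hθ => ?_) hw_int
          rw [norm_mul, Real.norm_of_nonneg (hw_nonneg θ hθ)]
          exact mul_le_of_le_one_right (hw_nonneg θ hθ) (abs_sin_le_one _)
      _ = (a * sin α)⁻¹ - a⁻¹ := by
          rw [integral_eq_sub_of_hasDerivAt
            (fun θ hθ => hasDerivAt_neg_inv_mul_sin (hsin θ hθ).ne') hw_int]
          simp only [sin_pi_div_two, mul_one]
          ring
      _ ≤ (a * sin α)⁻¹ := by linarith [inv_pos.2 ha]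
  rw [integral_cos_mul_cos_eq ha hα hαπ]
  calc _ ≤ (a * sin α)⁻¹ + (a * sin α)⁻¹ := (abs_sub _ _).trans (add_le_add hboundary htail)
    _ = 2 / (a * sin α) := by ring

lemma sub_div_le_integral_one_sub_cos_mul_cos (ha : 0 < a) (hα : 0 < α) (hαπ : α ≤ π / 2) :
    π / 2 - α - 2 / (a * sin α) ≤ ∫ θ in (-π)..π, (1 - cos (a * cos θ)) := by
  have hcos_int : ∀ b c : ℝ, IntervalIntegrable (fun θ => cos (a * cos θ)) volume b c :=
    Continuous.intervalIntegrable (by fun_prop)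
  calc π / 2 - α - 2 / (a * sin α) ≤ π / 2 - α - ∫ θ in α..π / 2, cos (a * cos θ) := by
        linarith [(abs_le.1 (abs_integral_cos_mul_cos_le ha hα hαπ)).2]
    _ = ∫ θ in α..π / 2, (1 - cos (a * cos θ)) := by
        rw [integral_sub intervalIntegrable_const (hcos_int _ _),
          intervalIntegral.integral_const, smul_eq_mul, mul_one]
    _ ≤ ∫ θ in (-π)..π, (1 - cos (a * cos θ)) :=
        integral_mono_interval (by linarith [pi_pos]) hαπ (by linarith [pi_pos])
          (ae_of_all _ fun θ => sub_nonneg.2 (cos_le_one _))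
          (intervalIntegrable_const.sub (hcos_int _ _))

end

theorem stmt0 :
    ∃ c > (0:ℝ), ∀ s : ℝ, 1 ≤ s →
      c ≤ ∫ θ in (-π)..π, (1 - Real.cos (2 * π * s * Real.cos θ)) := by
  refine ⟨1 / 3, by norm_num, fun s hs => ?_⟩
  have hπ := pi_gt_three
  have key := sub_div_le_integral_one_sub_cos_mul_cos (a := 2 * π * s) (α := π / 6)
    (by positivity) (by positivity) (by linarith)
  rw [sin_pi_div_six] at key
  have hdecay : 2 / (2 * π * s * (1 / 2)) ≤ 2 / 3 :=
    div_le_div_of_nonneg_left (by norm_num) (by norm_num) (by nlinarith)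
  linarith
end

section
/- For all real s ≥ 1, F(s) := ∫_0^π cos(2π s cos θ) dθ satisfies F(s) ≤ π - ε for some ε > 0 independent of s. -/
/-!
Write `cos (c cos θ) = cos (c cos θ) sin θ + cos (c cos θ) (1 - sin θ)`. The first part has the
explicit antiderivative `-sin (c cos θ) / c` and integrates to `2 sin c / c`, which is at most
`1 / π` once `c = 2πs ≥ 2π`; the second part is at most `∫₀^π (1 - sin θ) = π - 2`. Hence `ε = 2 - 1 / π` works.
-/

open Real intervalIntegral

theorem integral_cos_mul_cos_mul_sin {c : ℝ} (hc : c ≠ 0) :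
    ∫ θ in (0:ℝ)..π, cos (c * cos θ) * sin θ = 2 * sin c / c := by
  have hderiv : ∀ θ ∈ Set.uIcc (0:ℝ) π,
      HasDerivAt (fun x => -sin (c * cos x) / c) (cos (c * cos θ) * sin θ) θ := by
    intro θ _
    refine ((((hasDerivAt_cos θ).const_mul c).sin.neg).div_const c).congr_deriv ?_
    field_simp
  rw [integral_eq_sub_of_hasDerivAt hderiv (Continuous.intervalIntegrable (by fun_prop) _ _)]
  simp only [cos_pi, cos_zero, mul_neg, mul_one, sin_neg]
  ring

theorem integral_mul_one_sub_sin_le {f : ℝ → ℝ} (hf : Continuous f) (hf_le : ∀ θ, f θ ≤ 1) :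
    ∫ θ in (0:ℝ)..π, f θ * (1 - sin θ) ≤ π - 2 := by
  have hle : ∀ θ ∈ Set.Icc (0:ℝ) π, f θ * (1 - sin θ) ≤ 1 - sin θ := fun θ _ =>
    mul_le_of_le_one_left (sub_nonneg.2 (sin_le_one θ)) (hf_le θ)
  calc ∫ θ in (0:ℝ)..π, f θ * (1 - sin θ)
      ≤ ∫ θ in (0:ℝ)..π, (1 - sin θ) :=
        integral_mono_on pi_pos.le (Continuous.intervalIntegrable (by fun_prop) _ _)
          (Continuous.intervalIntegrable (by fun_prop) _ _) hle
    _ = π - 2 := by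
        rw [integral_sub intervalIntegrable_const intervalIntegrable_sin]
        simp only [integral_const, integral_sin, cos_pi, cos_zero, sub_zero, smul_eq_mul, mul_one]
        ring

theorem integral_cos_mul_cos_le {c : ℝ} (hc : c ≠ 0) :
    ∫ θ in (0:ℝ)..π, cos (c * cos θ) ≤ π - 2 + 2 * sin c / c := by
  have hsplit : ∫ θ in (0:ℝ)..π, cos (c * cos θ)
      = (∫ θ in (0:ℝ)..π, cos (c * cos θ) * sin θ)
        + ∫ θ in (0:ℝ)..π, cos (c * cos θ) * (1 - sin θ) := by
    rw [← integral_add (Continuous.intervalIntegrable (by fun_prop) _ _)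
      (Continuous.intervalIntegrable (by fun_prop) _ _)]
    simp only [← mul_add, add_sub_cancel, mul_one]
  rw [hsplit, integral_cos_mul_cos_mul_sin hc]
  linarith [integral_mul_one_sub_sin_le (f := fun θ => cos (c * cos θ)) (by fun_prop)
    (fun θ => cos_le_one _)]

theorem stmt1 :
    ∃ ε > (0:ℝ), ∀ s : ℝ, 1 ≤ s →
      (∫ θ in (0:ℝ)..π, Real.cos (2 * π * s * Real.cos θ)) ≤ π - ε := by
  refine ⟨2 - 1 / π, by linarith [(div_lt_one pi_pos).2 (by linarith [pi_gt_three] : (1:ℝ) < π)],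
    fun s hs => ?_⟩
  have hc : 2 * π ≤ 2 * π * s := le_mul_of_one_le_right (by positivity) hs
  have hc_pos : 0 < 2 * π * s := by positivity
  have hsin : 2 * sin (2 * π * s) / (2 * π * s) ≤ 1 / π := by
    rw [div_le_div_iff₀ hc_pos pi_pos]
    nlinarith [sin_le_one (2 * π * s)]
  linarith [integral_cos_mul_cos_le hc_pos.ne']
end

section
/- For s ≥ 1, ∫_0^{[s]-1/4} cos(2πx)/√(s² - x²) dx < 0, where [s] is the floor of s. -/
/-!
Split `[-1/4, ⌊s⌋ - 1/4]` into the periods `[k - 1/4, k + 3/4]`. On each, the reflection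
`x ↦ 2k + 1/2 - x` maps the arc where `cos (2πx) ≥ 0` onto the arc where it is `≤ 0`, flipping
the sign of the cosine and moving `x` away from `0`; since the weight `1/√(s² - x²)` increases
with `|x|`, each period contributes `≤ 0`. The piece `[-1/4, 0]` contributes `> 0`, so the
integral over `[0, ⌊s⌋ - 1/4]` is `< 0`.
-/

open Real Set intervalIntegral

lemma cos_two_pi_mul_reflect (k : ℤ) (x : ℝ) :
    cos (2 * π * (2 * k + 1/2 - x)) = -cos (2 * π * x) := by
  have h : 2 * π * (2 * k + 1/2 - x) = (π - 2 * π * x) + (2 * k : ℤ) * (2 * π) := by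
    push_cast; ring
  rw [h, cos_add_int_mul_two_pi, cos_pi_sub]

lemma cos_two_pi_mul_nonneg_of_mem_Icc {k : ℤ} {x : ℝ}
    (hx : x ∈ Icc ((k : ℝ) - 1/4) (k + 1/4)) :
    0 ≤ cos (2 * π * x) := by
  have h : 2 * π * x = 2 * π * (x - k) + k * (2 * π) := by ring
  rw [h, cos_add_int_mul_two_pi]
  apply cos_nonneg_of_mem_Icc
  constructor <;> nlinarith [pi_pos, hx.1, hx.2]

lemma cos_two_pi_mul_pos_of_mem_Ioo {x : ℝ} (hx : x ∈ Ioo (-1/4 : ℝ) (1/4)) :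
    0 < cos (2 * π * x) := by
  apply cos_pos_of_mem_Ioo
  constructor <;> nlinarith [pi_pos, hx.1, hx.2]

lemma integral_cos_mul_period_nonpos {w : ℝ → ℝ} (k : ℕ)
    (hw : ContinuousOn w (Icc ((k : ℝ) - 1/4) (k + 3/4)))
    (hmono : ∀ x y : ℝ, |x| ≤ y → y ≤ k + 3/4 → w x ≤ w y) :
    ∫ x in ((k : ℝ) - 1/4)..(k + 3/4), cos (2 * π * x) * w x ≤ 0 := by
  set f : ℝ → ℝ := fun x => cos (2 * π * x) * w x with hf_def
  have hf : ContinuousOn f (Icc ((k : ℝ) - 1/4) (k + 3/4)) := by fun_prop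
  have hint : ∀ a b, (k : ℝ) - 1/4 ≤ a → a ≤ b → b ≤ k + 3/4 →
      IntervalIntegrable f MeasureTheory.volume a b := fun a b ha hab hb =>
    (hf.mono (Icc_subset_Icc ha hb)).intervalIntegrable_of_Icc hab
  have hrefl : ∫ x in ((k : ℝ) + 1/4)..(k + 3/4), f x
      = ∫ x in ((k : ℝ) - 1/4)..(k + 1/4), f (2 * k + 1/2 - x) := by
    rw [integral_comp_sub_left]; congr 1 <;> ring
  have hle : ∫ x in ((k : ℝ) - 1/4)..(k + 1/4), f x
      ≤ ∫ x in ((k : ℝ) - 1/4)..(k + 1/4), -f (2 * k + 1/2 - x) := by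
    have hreflected :
        ContinuousOn (fun x => -f (2 * k + 1/2 - x)) (Icc ((k : ℝ) - 1/4) (k + 1/4)) :=
      (hf.comp (by fun_prop) fun x hx => ⟨by linarith [hx.2], by linarith [hx.1]⟩).neg
    refine integral_mono_on (by linarith) (hint _ _ le_rfl (by linarith) (by linarith))
      (hreflected.intervalIntegrable_of_Icc (by linarith)) fun x hx => ?_
    have hwx : w x ≤ w (2 * k + 1/2 - x) :=
      hmono _ _ (abs_le.2 ⟨by linarith [hx.2], by linarith [hx.2]⟩) (by linarith [hx.1])
    have hcos := cos_two_pi_mul_nonneg_of_mem_Icc (k := k) (by exact_mod_cast hx)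
    have hreflect := cos_two_pi_mul_reflect k x
    push_cast at hreflect
    simp only [hf_def, hreflect, neg_mul, neg_neg]
    exact mul_le_mul_of_nonneg_left hwx hcos
  rw [← integral_add_adjacent_intervals
    (hint _ ((k : ℝ) + 1/4) le_rfl (by linarith) (by linarith))
    (hint _ _ (by linarith) (by linarith) le_rfl), hrefl]
  rw [integral_neg] at hle
  linarith

lemma integral_cos_mul_periods_nonpos {w : ℝ → ℝ} (n : ℕ)
    (hw : ContinuousOn w (Icc (-1/4 : ℝ) (n - 1/4)))
    (hmono : ∀ x y : ℝ, |x| ≤ y → y ≤ n - 1/4 → w x ≤ w y) :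
    ∫ x in (-1/4 : ℝ)..(n - 1/4), cos (2 * π * x) * w x ≤ 0 := by
  induction n with
  | zero => norm_num
  | succ n ih =>
    have hend : ((n + 1 : ℕ) : ℝ) - 1/4 = n + 3/4 := by push_cast; ring
    rw [hend] at hw hmono ⊢
    have hcont : ContinuousOn (fun x => cos (2 * π * x) * w x) (Icc (-1/4 : ℝ) (n + 3/4)) := by
      fun_prop
    rw [← integral_add_adjacent_intervals (b := (n : ℝ) - 1/4)
      ((hcont.mono (Icc_subset_Icc_right (by linarith))).intervalIntegrable_of_Icc (by linarith))
      ((hcont.mono (Icc_subset_Icc_left (by linarith))).intervalIntegrable_of_Icc (by linarith))]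
    have hprev := ih (hw.mono (Icc_subset_Icc_right (by linarith)))
      fun x y hxy hy => hmono x y hxy (by linarith)
    have hlast := integral_cos_mul_period_nonpos n (hw.mono (Icc_subset_Icc_left (by linarith)))
      hmono
    linarith

lemma integral_cos_mul_pos_of_pos {w : ℝ → ℝ} (hw : ContinuousOn w (Icc (-1/4 : ℝ) 0))
    (hpos : ∀ x ∈ Ioo (-1/4 : ℝ) 0, 0 < w x) :
    0 < ∫ x in (-1/4 : ℝ)..0, cos (2 * π * x) * w x := by
  have hcont : ContinuousOn (fun x => cos (2 * π * x) * w x) (Icc (-1/4 : ℝ) 0) := by fun_prop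
  refine intervalIntegral_pos_of_pos_on (hcont.intervalIntegrable_of_Icc (by norm_num))
    (fun x hx => ?_) (by norm_num)
  exact mul_pos (cos_two_pi_mul_pos_of_mem_Ioo ⟨hx.1, by linarith [hx.2]⟩) (hpos x hx)

lemma integral_cos_mul_neg {w : ℝ → ℝ} {n : ℕ} (hn : 1 ≤ n)
    (hw : ContinuousOn w (Icc (-1/4 : ℝ) (n - 1/4)))
    (hpos : ∀ x ∈ Ioo (-1/4 : ℝ) 0, 0 < w x)
    (hmono : ∀ x y : ℝ, |x| ≤ y → y ≤ n - 1/4 → w x ≤ w y) :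
    ∫ x in (0 : ℝ)..(n - 1/4), cos (2 * π * x) * w x < 0 := by
  have hn' : (1 : ℝ) ≤ n := by exact_mod_cast hn
  have hcont : ContinuousOn (fun x => cos (2 * π * x) * w x) (Icc (-1/4 : ℝ) (n - 1/4)) := by
    fun_prop
  have hperiods := integral_cos_mul_periods_nonpos n hw hmono
  have hfirst := integral_cos_mul_pos_of_pos (hw.mono (Icc_subset_Icc_right (by linarith))) hpos
  rw [← integral_add_adjacent_intervals (b := 0)
    ((hcont.mono (Icc_subset_Icc_right (by linarith))).intervalIntegrable_of_Icc (by norm_num))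
    ((hcont.mono (Icc_subset_Icc_left (by norm_num))).intervalIntegrable_of_Icc (by linarith))]
    at hperiods
  linarith

lemma continuousOn_inv_sqrt_sq_sub_sq (s : ℝ) :
    ContinuousOn (fun x => (√(s ^ 2 - x ^ 2))⁻¹) (Ioo (-s) s) := by
  refine ContinuousOn.inv₀ (by fun_prop) fun x hx => (sqrt_pos.2 ?_).ne'
  nlinarith [hx.1, hx.2]

lemma inv_sqrt_sq_sub_sq_le {s x y : ℝ} (hxy : |x| ≤ y) (hys : y < s) :
    (√(s ^ 2 - x ^ 2))⁻¹ ≤ (√(s ^ 2 - y ^ 2))⁻¹ := by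
  have hy : 0 ≤ y := (abs_nonneg x).trans hxy
  refine inv_anti₀ (sqrt_pos.2 ?_) (sqrt_le_sqrt ?_)
  · nlinarith
  · nlinarith [sq_abs x, abs_nonneg x]

theorem stmt4 (s : ℝ) (hs : 1 ≤ s) :
    (∫ x in (0:ℝ)..((⌊s⌋ : ℝ) - 1/4),
        Real.cos (2 * π * x) / Real.sqrt (s ^ 2 - x ^ 2)) < 0 := by
  obtain ⟨n, hn⟩ : ∃ n : ℕ, ⌊s⌋ = n :=
    Int.eq_ofNat_of_zero_le (Int.floor_nonneg.2 (by linarith))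
  have hn1 : 1 ≤ n := by
    have : (1 : ℤ) ≤ ⌊s⌋ := Int.le_floor.2 (by exact_mod_cast hs)
    omega
  have hns : (n : ℝ) ≤ s := by exact_mod_cast hn.symm ▸ Int.floor_le s
  rw [hn, Int.cast_natCast]
  simp only [div_eq_mul_inv]
  refine integral_cos_mul_neg hn1
    ((continuousOn_inv_sqrt_sq_sub_sq s).mono fun x hx =>
      ⟨by linarith [hx.1], by linarith [hx.2]⟩)
    (fun x hx => inv_pos.2 (sqrt_pos.2 (by nlinarith [hx.1, hx.2])))
    fun x y hxy hy => inv_sqrt_sq_sub_sq_le hxy (by linarith)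
end

section
/- Let ω be a modulus of continuity (increasing, ω(0)=0) satisfying ω(r) ≥ c r^ε on (0, 1/2] for some ε ∈ (0,1), constant for r ≥ 1/2, and satisfying the square-Dini condition ∫_0^{1/2} ω(r)²/r dr < ∞. Then for every ξ ∈ ℝ², the integral I(ξ) = ∫_{ℝ²} |e^{-2πi ξ·y} - 1|² / (|y|² ω̃(|y|)²) dy is finite, where ω̃(r) = ω(r) for 0 < r < 1 and ω̃(r) = 1/ω(1/r) for r > 1. -/
open MeasureTheory Real

open scoped ENNReal

open Set Metric in
private lemma lintegral_fun_norm_aux' {E : Type*} [NormedAddCommGroup E] [NormedSpace ℝ E]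
    [MeasurableSpace E] [BorelSpace E] [FiniteDimensional ℝ E] [Nontrivial E]
    (μ : Measure E) [Measure.IsAddHaarMeasure μ] (f : ℝ → ℝ≥0∞) (hf : Measurable f) :
    ∫⁻ x, f ‖x‖ ∂μ = μ.toSphere univ *
      ∫⁻ r in Ioi (0:ℝ), ENNReal.ofReal (r ^ (Module.finrank ℝ E - 1)) * f r := by
  have h0 : ∫⁻ x, f ‖x‖ ∂μ = ∫⁻ x : ({0}ᶜ : Set E), f ‖(x : E)‖ ∂(μ.comap (↑)) := by
    rw [lintegral_subtype_comap (measurableSet_singleton 0).compl (fun a : E => f ‖a‖),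
      MeasureTheory.restrict_compl_singleton]
  rw [h0]
  have h1 := (μ.measurePreserving_homeomorphUnitSphereProd).lintegral_comp_emb
      (Homeomorph.measurableEmbedding _) (fun p : sphere (0:E) 1 × Ioi (0:ℝ) => f p.2)
  simp only [homeomorphUnitSphereProd_apply_snd_coe] at h1
  rw [h1]
  rw [lintegral_prod (fun p : sphere (0:E) 1 × Ioi (0:ℝ) => f p.2) ((hf.comp
    (measurable_subtype_coe.comp measurable_snd)).aemeasurable)]
  simp only [lintegral_const]
  rw [Measure.volumeIoiPow,
    lintegral_withDensity_eq_lintegral_mul _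
      ((measurable_subtype_coe.pow_const _).ennreal_ofReal)
      (g := fun r : Ioi (0:ℝ) => f ↑r) (hf.comp measurable_subtype_coe)]
  rw [mul_comm]
  congr 1
  rw [← lintegral_subtype_comap measurableSet_Ioi
      (fun r : ℝ => ENNReal.ofReal (r ^ (Module.finrank ℝ E - 1)) * f r)]
  rfl

private lemma norm_exp_mul_I_sub_one_sq_le' (t : ℝ) :
    ‖Complex.exp ((t:ℂ) * Complex.I) - 1‖ ^ 2 ≤ min 4 (t ^ 2) := by
  have h2 : ‖Complex.exp ((t:ℂ) * Complex.I) - 1‖ ^ 2 = 2 - 2 * Real.cos t := by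
    rw [Complex.sq_norm, Complex.normSq_apply]
    simp only [Complex.sub_re, Complex.sub_im, Complex.one_re, Complex.one_im,
      Complex.exp_ofReal_mul_I_re, Complex.exp_ofReal_mul_I_im]
    nlinarith [Real.sin_sq_add_cos_sq t]
  rw [h2, le_min_iff]
  constructor
  · nlinarith [Real.neg_one_le_cos t]
  · have hs := Real.sin_sq_le_sq (x := t/2)
    have hc : Real.cos t = 2 * Real.cos (t/2) ^ 2 - 1 := by
      rw [← Real.cos_two_mul]; ring_nf
    nlinarith [Real.sin_sq_add_cos_sq (t/2)]

set_option maxHeartbeats 1000000 in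
theorem stmt6 (ω ωt : ℝ → ℝ) (c ε : ℝ) (hc : 0 < c) (hε : 0 < ε) (hε1 : ε < 1)
    (hmono : MonotoneOn ω (Set.Ici 0)) (hω0 : ω 0 = 0) (hωpos : ∀ r > (0:ℝ), 0 < ω r)
    (hlow : ∀ r : ℝ, 0 < r → r ≤ 1/2 → c * r ^ ε ≤ ω r)
    (hconst : ∀ r : ℝ, 1/2 ≤ r → ω r = ω (1/2))
    (hsquareDini : IntegrableOn (fun r => ω r ^ 2 / r) (Set.Ioc (0:ℝ) (1/2)))
    (hωt1 : ∀ r : ℝ, 0 < r → r < 1 → ωt r = ω r)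
    (hωt2 : ∀ r : ℝ, 1 < r → ωt r = 1 / ω (1/r)) :
    ∀ ξ : EuclideanSpace ℝ (Fin 2),
      (∫⁻ y : EuclideanSpace ℝ (Fin 2),
        ENNReal.ofReal
          (‖Complex.exp (-(2 * π * Complex.I) * ((inner ℝ ξ y : ℝ) : ℂ)) - 1‖ ^ 2
            / (‖y‖ ^ 2 * ωt ‖y‖ ^ 2))) < ⊤ := by
  intro ξ
  classical
  -- the monotone extension of ω to all of ℝ
  set ω₂ : ℝ → ℝ := fun s => ω (max s 0) with hω₂def
  have hmω₂ : Monotone ω₂ := fun a b hab =>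
    hmono (Set.mem_Ici.2 (le_max_right _ _)) (Set.mem_Ici.2 (le_max_right _ _))
      (max_le_max hab le_rfl)
  have hmeasω₂ : Measurable ω₂ := hmω₂.measurable
  have hω₂eq : ∀ s : ℝ, 0 < s → ω₂ s = ω s := by
    intro s hs
    simp only [hω₂def, max_eq_left hs.le]
  -- lower bound for ω on (0,1)
  have hkey : ∀ r : ℝ, 0 < r → r < 1 → c / 2 * r ^ ε ≤ ω r := by
    intro r hr hr1
    rcases le_or_gt r (1/2) with h | h
    · have hrε : (0:ℝ) ≤ r ^ ε := (Real.rpow_pos_of_pos hr ε).le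
      calc c/2 * r^ε ≤ c * r^ε := by nlinarith
        _ ≤ ω r := hlow r hr h
    · have h1 : ω r = ω (1/2) := hconst r h.le
      have h2 : c * (1/2:ℝ)^ε ≤ ω (1/2) := hlow _ (by norm_num) le_rfl
      have h3 : (1/2:ℝ) ≤ (1/2:ℝ)^ε := by
        calc (1/2:ℝ) = (1/2:ℝ)^(1:ℝ) := (Real.rpow_one _).symm
          _ ≤ (1/2:ℝ)^ε := Real.rpow_le_rpow_of_exponent_ge (by norm_num) (by norm_num) hε1.le
      have h4 : r ^ ε ≤ 1 := Real.rpow_le_one hr.le hr1.le hε.le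
      have hrε : (0:ℝ) ≤ r ^ ε := (Real.rpow_pos_of_pos hr ε).le
      calc c/2 * r^ε ≤ c/2 * 1 := by nlinarith
        _ = c * (1/2) := by ring
        _ ≤ c * (1/2:ℝ)^ε := by nlinarith
        _ ≤ ω (1/2) := h2
        _ = ω r := h1.symm
  set A : ℝ := (2*π*‖ξ‖)^2 * (2/c)^2 with hA
  set g₁ : ℝ → ℝ := (Set.Ioc (0:ℝ) 1).indicator (fun r => A * r ^ (-(2*ε))) with hg₁
  set g₂ : ℝ → ℝ := (Set.Ioi (1:ℝ)).indicator (fun r => 4 * ω₂ (1/r)^2 / r^2) with hg₂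
  have measg₁ : Measurable g₁ := Measurable.indicator
    (measurable_const.mul (by fun_prop : Measurable fun r : ℝ => r ^ (-(2*ε)))) measurableSet_Ioc
  have measg₂ : Measurable g₂ := Measurable.indicator
    ((((hmeasω₂.comp (measurable_const.div measurable_id)).pow_const 2).const_mul 4).div
      (measurable_id.pow_const 2)) measurableSet_Ioi
  -- a.e. pointwise bound
  have hbound : ∀ᵐ y : EuclideanSpace ℝ (Fin 2), ENNReal.ofReal
      (‖Complex.exp (-(2 * π * Complex.I) * ((inner ℝ ξ y : ℝ) : ℂ)) - 1‖ ^ 2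
        / (‖y‖ ^ 2 * ωt ‖y‖ ^ 2))
      ≤ ENNReal.ofReal (g₁ ‖y‖) + ENNReal.ofReal (g₂ ‖y‖) := by
    have hs0 : volume (Metric.sphere (0:EuclideanSpace ℝ (Fin 2)) 0) = 0 :=
      Measure.addHaar_sphere _ _ _
    have hs1 : volume (Metric.sphere (0:EuclideanSpace ℝ (Fin 2)) 1) = 0 :=
      Measure.addHaar_sphere _ _ _
    filter_upwards [compl_mem_ae_iff.2 hs0, compl_mem_ae_iff.2 hs1] with y hy0 hy1
    rw [Set.mem_compl_iff, mem_sphere_zero_iff_norm] at hy0 hy1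
    have hr : 0 < ‖y‖ := lt_of_le_of_ne (norm_nonneg y) (Ne.symm hy0)
    set θ : ℝ := inner ℝ ξ y with hθ
    have harg : -(2 * ↑π * Complex.I) * ((θ:ℝ):ℂ) = ((-(2*π*θ) : ℝ) : ℂ) * Complex.I := by
      push_cast; ring
    rw [harg]
    have hN := norm_exp_mul_I_sub_one_sq_le' (-(2*π*θ))
    set N : ℝ := ‖Complex.exp (((-(2*π*θ) : ℝ) : ℂ) * Complex.I) - 1‖ ^ 2 with hNdef
    have hN0 : 0 ≤ N := by positivity
    have hN4 : N ≤ 4 := le_trans hN (min_le_left _ _)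
    have hNt : N ≤ (2*π*‖ξ‖)^2 * ‖y‖^2 := by
      refine le_trans (le_trans hN (min_le_right _ _)) ?_
      have hinner : |θ| ≤ ‖ξ‖ * ‖y‖ := abs_real_inner_le_norm ξ y
      have habs : θ^2 ≤ (‖ξ‖ * ‖y‖)^2 := by
        nlinarith [abs_nonneg θ, sq_abs θ]
      calc (-(2*π*θ))^2 = (2*π)^2 * θ^2 := by ring
        _ ≤ (2*π)^2 * (‖ξ‖*‖y‖)^2 := by
            have : (0:ℝ) ≤ (2*π)^2 := by positivity
            nlinarith
        _ = (2*π*‖ξ‖)^2 * ‖y‖^2 := by ring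
    rcases lt_trichotomy ‖y‖ 1 with hr1 | hr1 | hr1
    · -- small radius
      have hωt : ωt ‖y‖ = ω ‖y‖ := hωt1 _ hr hr1
      have hg₂0 : g₂ ‖y‖ = 0 :=
        Set.indicator_of_notMem (by simp only [Set.mem_Ioi, not_lt]; exact hr1.le) _
      rw [hg₂0, ENNReal.ofReal_zero, add_zero, hωt]
      apply ENNReal.ofReal_le_ofReal
      have hg₁r : g₁ ‖y‖ = A * ‖y‖ ^ (-(2*ε)) := Set.indicator_of_mem (Set.mem_Ioc.2 ⟨hr, hr1.le⟩) _
      rw [hg₁r]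
      have hω := hkey _ hr hr1
      have hωr0 : 0 < c/2 * ‖y‖^ε := by
        have := Real.rpow_pos_of_pos hr ε; positivity
      have hd : (0:ℝ) < ‖y‖^2 * (c/2 * ‖y‖^ε)^2 := by positivity
      have hωpos' : 0 < ω ‖y‖ := hωpos _ hr
      calc N / (‖y‖^2 * ω ‖y‖^2)
          ≤ ((2*π*‖ξ‖)^2 * ‖y‖^2) / (‖y‖^2 * (c/2 * ‖y‖^ε)^2) := by
            apply div_le_div₀ (by positivity) hNt hd
            have h5 : (c/2 * ‖y‖^ε)^2 ≤ ω ‖y‖^2 := by nlinarith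
            nlinarith [sq_nonneg ‖y‖]
        _ = A * ‖y‖ ^ (-(2*ε)) := by
            rw [Real.rpow_neg hr.le]
            have hε2 : ‖y‖ ^ (2*ε) = (‖y‖^ε)^2 := by
              rw [← Real.rpow_natCast (‖y‖^ε) 2, ← Real.rpow_mul hr.le]
              norm_num
              ring_nf
            rw [hε2, hA]
            have h1 : ‖y‖^ε ≠ 0 := ne_of_gt (Real.rpow_pos_of_pos hr ε)
            have h2 : ‖y‖ ≠ 0 := ne_of_gt hr
            field_simp
    · exact absurd hr1 hy1
    · -- large radius
      have hωt : ωt ‖y‖ = 1 / ω (1/‖y‖) := hωt2 _ hr1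
      have hinvpos : 0 < 1/‖y‖ := by positivity
      have hw : 0 < ω (1/‖y‖) := hωpos _ hinvpos
      have hg₁0 : g₁ ‖y‖ = 0 :=
        Set.indicator_of_notMem (by simp only [Set.mem_Ioc, not_and, not_le]
                                    intro _; exact hr1) _
      rw [hg₁0, ENNReal.ofReal_zero, zero_add]
      apply ENNReal.ofReal_le_ofReal
      have hg₂r : g₂ ‖y‖ = 4 * ω₂ (1/‖y‖)^2 / ‖y‖^2 := Set.indicator_of_mem hr1 _
      rw [hg₂r, hωt, hω₂eq _ hinvpos]
      have hwne : ω (1/‖y‖) ≠ 0 := ne_of_gt hw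
      have hyne : ‖y‖ ≠ 0 := ne_of_gt hr
      have heq : N / (‖y‖^2 * (1/ω (1/‖y‖))^2) = N * ω (1/‖y‖)^2 / ‖y‖^2 := by
        field_simp
      rw [heq]
      gcongr
  -- put everything together
  have hG₁ : Measurable fun r : ℝ => ENNReal.ofReal (g₁ r) := measg₁.ennreal_ofReal
  have hG₂ : Measurable fun r : ℝ => ENNReal.ofReal (g₂ r) := measg₂.ennreal_ofReal
  have hrad₁ := lintegral_fun_norm_aux' (volume : Measure (EuclideanSpace ℝ (Fin 2))) _ hG₁
  have hrad₂ := lintegral_fun_norm_aux' (volume : Measure (EuclideanSpace ℝ (Fin 2))) _ hG₂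
  norm_num [finrank_euclideanSpace_fin] at hrad₁ hrad₂
  -- finiteness of the first radial integral
  have hS₁ : ∫⁻ r in Set.Ioi (0:ℝ), ENNReal.ofReal r * ENNReal.ofReal (g₁ r) < ⊤ := by
    have hint : Integrable ((Set.Ioc (0:ℝ) 1).indicator (fun r => A * r ^ ((1:ℝ)-2*ε))) := by
      rw [integrable_indicator_iff measurableSet_Ioc]
      have h1 : IntervalIntegrable (fun x : ℝ => x ^ ((1:ℝ)-2*ε)) volume 0 1 :=
        intervalIntegral.intervalIntegrable_rpow' (by linarith)
      have h2 : IntegrableOn (fun x : ℝ => x ^ ((1:ℝ)-2*ε)) (Set.Ioc (0:ℝ) 1) := by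
        have := intervalIntegrable_iff.1 h1
        rwa [Set.uIoc_of_le zero_le_one] at this
      exact h2.const_mul A
    calc ∫⁻ r in Set.Ioi (0:ℝ), ENNReal.ofReal r * ENNReal.ofReal (g₁ r)
        ≤ ∫⁻ r in Set.Ioi (0:ℝ),
            ENNReal.ofReal ((Set.Ioc (0:ℝ) 1).indicator (fun r => A * r ^ ((1:ℝ)-2*ε)) r) := by
          apply lintegral_mono_ae
          filter_upwards [ae_restrict_mem measurableSet_Ioi] with r hrr
          rw [← ENNReal.ofReal_mul (le_of_lt hrr)]
          apply ENNReal.ofReal_le_ofReal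
          by_cases hm : r ∈ Set.Ioc (0:ℝ) 1
          · rw [hg₁, Set.indicator_of_mem hm, Set.indicator_of_mem hm]
            apply le_of_eq
            calc r * (A * r ^ (-(2*ε))) = A * (r ^ (1:ℝ) * r ^ (-(2*ε))) := by
                  rw [Real.rpow_one]; ring
              _ = A * r ^ ((1:ℝ)-2*ε) := by
                  rw [← Real.rpow_add hrr]; ring_nf
          · rw [hg₁, Set.indicator_of_notMem hm, Set.indicator_of_notMem hm, mul_zero]
      _ ≤ ∫⁻ r, ENNReal.ofReal
            ((Set.Ioc (0:ℝ) 1).indicator (fun r => A * r ^ ((1:ℝ)-2*ε)) r) :=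
          setLIntegral_le_lintegral _ _
      _ < ⊤ := hint.lintegral_lt_top
  -- finiteness of the second radial integral
  have hS₂ : ∫⁻ r in Set.Ioi (0:ℝ), ENNReal.ofReal r * ENNReal.ofReal (g₂ r) < ⊤ := by
    have hf₀ : IntegrableOn (fun s => 4 * ω₂ s^2 / s) (Set.Ioc (0:ℝ) 1) := by
      have hpart1 : IntegrableOn (fun s => 4 * ω₂ s^2 / s) (Set.Ioc (0:ℝ) (1/2)) := by
        have h4 : IntegrableOn (fun s => 4 * (ω s^2 / s)) (Set.Ioc (0:ℝ) (1/2)) :=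
          hsquareDini.const_mul 4
        apply h4.congr_fun ?_ measurableSet_Ioc
        intro s hs
        show 4 * (ω s ^ 2 / s) = 4 * ω₂ s ^ 2 / s
        rw [hω₂eq s hs.1]
        ring
      have hpart2 : IntegrableOn (fun s => 4 * ω₂ s^2 / s) (Set.Ioc (1/2:ℝ) 1) := by
        have hcont : ContinuousOn (fun s : ℝ => 4 * ω (1/2)^2 / s) (Set.Icc (1/2:ℝ) 1) := by
          apply ContinuousOn.div continuousOn_const continuousOn_id
          intro x hx
          have : (0:ℝ) < x := lt_of_lt_of_le one_half_pos hx.1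
          exact ne_of_gt this
        have hI : IntegrableOn (fun s : ℝ => 4 * ω (1/2)^2 / s) (Set.Icc (1/2:ℝ) 1) :=
          hcont.integrableOn_compact isCompact_Icc
        apply (hI.mono_set Set.Ioc_subset_Icc_self).congr_fun ?_ measurableSet_Ioc
        intro s hs
        have hspos : (0:ℝ) < s := lt_trans one_half_pos hs.1
        show 4 * ω (1/2) ^ 2 / s = 4 * ω₂ s ^ 2 / s
        rw [hω₂eq s hspos, hconst s hs.1.le]
      have := hpart1.union hpart2
      rwa [Set.Ioc_union_Ioc_eq_Ioc (by norm_num) (by norm_num)] at this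
    set f₀ : ℝ → ℝ := (Set.Ioc (0:ℝ) 1).indicator (fun s => 4 * ω₂ s^2 / s) with hf₀def
    have hf₀' : IntegrableOn f₀ (Set.Ioi (0:ℝ)) :=
      ((integrable_indicator_iff measurableSet_Ioc).2 hf₀).integrableOn
    have hsub := (integrableOn_Ioi_comp_rpow_iff' f₀ (p := (-1:ℝ)) (by norm_num)).2 hf₀'
    have hsub' := hsub.mono_set (Set.Ioi_subset_Ioi zero_le_one)
    have hint : IntegrableOn (fun r => 4 * ω₂ (1/r)^2 / r) (Set.Ioi (1:ℝ)) := by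
      apply hsub'.congr_fun ?_ measurableSet_Ioi
      intro x hx
      rw [Set.mem_Ioi] at hx
      have hx0 : (0:ℝ) < x := lt_trans zero_lt_one hx
      have hinv : x ^ (-1:ℝ) = 1/x := by
        rw [Real.rpow_neg hx0.le, Real.rpow_one, one_div]
      have hmem : (1/x) ∈ Set.Ioc (0:ℝ) 1 :=
        ⟨by positivity, by rw [div_le_one hx0]; exact hx.le⟩
      have hpow : x ^ ((-1:ℝ) - 1) = (x^2)⁻¹ := by
        rw [show ((-1:ℝ) - 1) = -(2:ℕ) by norm_num, Real.rpow_neg hx0.le,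
          Real.rpow_natCast]
      show x ^ ((-1:ℝ) - 1) • f₀ (x ^ (-1:ℝ)) = 4 * ω₂ (1/x)^2 / x
      rw [hinv, hf₀def, Set.indicator_of_mem hmem, smul_eq_mul, hpow]
      have hxne : x ≠ 0 := ne_of_gt hx0
      field_simp
    have hint' : Integrable ((Set.Ioi (1:ℝ)).indicator (fun r => 4 * ω₂ (1/r)^2 / r)) :=
      (integrable_indicator_iff measurableSet_Ioi).2 hint
    calc ∫⁻ r in Set.Ioi (0:ℝ), ENNReal.ofReal r * ENNReal.ofReal (g₂ r)
        ≤ ∫⁻ r in Set.Ioi (0:ℝ),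
            ENNReal.ofReal ((Set.Ioi (1:ℝ)).indicator (fun r => 4 * ω₂ (1/r)^2 / r) r) := by
          apply lintegral_mono_ae
          filter_upwards [ae_restrict_mem measurableSet_Ioi] with r hrr
          rw [← ENNReal.ofReal_mul (le_of_lt hrr)]
          apply ENNReal.ofReal_le_ofReal
          by_cases hm : r ∈ Set.Ioi (1:ℝ)
          · rw [hg₂, Set.indicator_of_mem hm, Set.indicator_of_mem hm]
            apply le_of_eq
            have hrne : r ≠ 0 := ne_of_gt hrr
            field_simp
          · rw [hg₂, Set.indicator_of_notMem hm, Set.indicator_of_notMem hm, mul_zero]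
      _ ≤ ∫⁻ r, ENNReal.ofReal
            ((Set.Ioi (1:ℝ)).indicator (fun r => 4 * ω₂ (1/r)^2 / r) r) :=
          setLIntegral_le_lintegral _ _
      _ < ⊤ := hint'.lintegral_lt_top
  -- final computation
  calc ∫⁻ y : EuclideanSpace ℝ (Fin 2), ENNReal.ofReal
          (‖Complex.exp (-(2 * π * Complex.I) * ((inner ℝ ξ y : ℝ) : ℂ)) - 1‖ ^ 2
            / (‖y‖ ^ 2 * ωt ‖y‖ ^ 2))
      ≤ ∫⁻ y : EuclideanSpace ℝ (Fin 2),
          (ENNReal.ofReal (g₁ ‖y‖) + ENNReal.ofReal (g₂ ‖y‖)) := lintegral_mono_ae hbound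
    _ = (∫⁻ y : EuclideanSpace ℝ (Fin 2), ENNReal.ofReal (g₁ ‖y‖))
        + ∫⁻ y : EuclideanSpace ℝ (Fin 2), ENNReal.ofReal (g₂ ‖y‖) :=
        lintegral_add_left (hG₁.comp measurable_norm) _
    _ < ⊤ := by
        rw [hrad₁, hrad₂]
        have h2top : (2 : ℝ≥0∞) * ENNReal.ofReal π < ⊤ :=
          ENNReal.mul_lt_top (by norm_num) ENNReal.ofReal_lt_top
        exact ENNReal.add_lt_top.2
          ⟨ENNReal.mul_lt_top h2top hS₁, ENNReal.mul_lt_top h2top hS₂⟩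
end

section
/- With σ a modulus of continuity such that ζ(r) := r σ(r) is a strictly increasing surjection [0,∞) → [0,∞), if f ∈ C₀^{1,σ}(ℝ²) with [f_{x_i}]_σ ≠ 0 then ‖f_{x_i}‖_∞ ≤ 2 σ(ζ^{-1}(‖f‖_∞ / [f_{x_i}]_σ)) · [f_{x_i}]_σ. -/
/-!
Along the line through `x` in direction `eᵢ`, subtracting the tangent line `s ↦ s f_{xᵢ}(x)` leaves
a function whose derivative is at most `L σ(r)` on `[-r, r]`, so by the mean value theorem
`2r |f_{xᵢ}(x)| ≤ 2‖f‖_∞ + 2r L σ(r)`. Choosing `r = ζ⁻¹(‖f‖_∞ / L)` makes `‖f‖_∞ / r = L σ(r)`.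
-/

open Set

theorem abs_deriv_le_add_div {g g' : ℝ → ℝ} {M K a r : ℝ} (hr : 0 < r)
    (hg : ∀ s, HasDerivAt g (g' s) s) (hM : ∀ s, |g s| ≤ M)
    (hK : ∀ s ∈ Icc (a - r) (a + r), |g' s - g' a| ≤ K) :
    |g' a| ≤ K + M / r := by
  have hmvt := norm_image_sub_le_of_norm_deriv_le_segment'
    (f := fun s => g s - s * g' a) (f' := fun s => g' s - g' a)
    (fun s _ => ((hg s).sub ((hasDerivAt_id s).mul_const (g' a))).hasDerivWithinAt |>.congr_deriv
      (by simp))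
    (fun s hs => hK s (Ico_subset_Icc_self hs)) (a + r) (right_mem_Icc.2 (by linarith))
  simp only [Real.norm_eq_abs] at hmvt
  have hgap : |g (a + r) - g (a - r)| ≤ 2 * M := by
    have := abs_sub (g (a + r)) (g (a - r))
    linarith [hM (a + r), hM (a - r)]
  have hsplit : 2 * r * g' a = (g (a + r) - g (a - r))
      - (g (a + r) - (a + r) * g' a - (g (a - r) - (a - r) * g' a)) := by ring
  have h2r : 2 * r * |g' a| ≤ 2 * M + K * (2 * r) := by
    have := abs_sub (g (a + r) - g (a - r))
      (g (a + r) - (a + r) * g' a - (g (a - r) - (a - r) * g' a))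
    rw [← hsplit, abs_mul, abs_mul, abs_two, abs_of_pos hr] at this
    linarith [show a + r - (a - r) = 2 * r by ring]
  rw [← sub_le_iff_le_add', le_div_iff₀ hr]
  linarith

theorem abs_fderiv_apply_le_add_div {E : Type*} [NormedAddCommGroup E] [NormedSpace ℝ E]
    {f : E → ℝ} (hf : Differentiable ℝ f) {ω : ℝ → ℝ} (hω : Monotone ω) {v : E} (hv : ‖v‖ ≤ 1)
    {M r : ℝ} (hr : 0 < r) (hM : ∀ x, |f x| ≤ M)
    (hD : ∀ x y, |fderiv ℝ f x v - fderiv ℝ f y v| ≤ ω (dist x y)) (x : E) :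
    |fderiv ℝ f x v| ≤ ω r + M / r := by
  have hline : ∀ s : ℝ, HasDerivAt (fun u : ℝ => f (x + u • v)) (fderiv ℝ f (x + s • v) v) s :=
    fun s => (hf _).hasFDerivAt.comp_hasDerivAt s
      (((hasDerivAt_id s).smul_const v).const_add x |>.congr_deriv (by simp))
  have := abs_deriv_le_add_div hr hline (fun s => hM _) (a := 0) (K := ω r) fun s hs => by
    refine (hD _ _).trans (hω ?_)
    rw [dist_eq_norm, zero_smul, add_zero, add_sub_cancel_left, norm_smul, Real.norm_eq_abs]
    have : |s| ≤ r := abs_le.2 (by simpa using hs)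
    nlinarith [abs_nonneg s, norm_nonneg v]
  simpa using this

theorem stmt17_general (σ : ℝ → ℝ) (hσmono : Monotone σ) (hσ0 : σ 0 = 0)
    (ζinv : ℝ → ℝ)
    (hζinv : ∀ t : ℝ, 0 ≤ t → 0 ≤ ζinv t ∧ ζinv t * σ (ζinv t) = t)
    (f : EuclideanSpace ℝ (Fin 2) → ℝ)
    (hf : ContDiff ℝ 1 f) (i : Fin 2)
    (L Mf : ℝ) (hLpos : 0 < L) (hMf0 : 0 ≤ Mf) (hMf : ∀ x, |f x| ≤ Mf)
    (hL : ∀ x y, |fderiv ℝ f x (EuclideanSpace.single i 1)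
                  - fderiv ℝ f y (EuclideanSpace.single i 1)| ≤ L * σ (dist x y)) :
    ∀ x, |fderiv ℝ f x (EuclideanSpace.single i 1)|
      ≤ 2 * σ (ζinv (Mf / L)) * L := by
  intro x
  rcases hMf0.eq_or_lt with rfl | hMf_pos
  · have hf_zero : f = 0 := funext fun y => abs_nonpos_iff.1 (hMf y)
    have hσ_nonneg : 0 ≤ σ (ζinv (0 / L)) :=
      hσ0.symm.le.trans (hσmono (hζinv _ (zero_div L).ge).1)
    rw [hf_zero, fderiv_zero, Pi.zero_apply, zero_apply, abs_zero]
    positivity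
  · obtain ⟨hr_nonneg, hr⟩ := hζinv (Mf / L) (by positivity)
    set r := ζinv (Mf / L)
    have hr_pos : 0 < r := hr_nonneg.lt_of_ne fun h => by
      rw [← h, zero_mul] at hr
      exact (div_pos hMf_pos hLpos).ne hr
    have hMf_div : Mf / r = L * σ r := by
      field_simp at hr ⊢
      linarith
    have := abs_fderiv_apply_le_add_div (hf.differentiable one_ne_zero)
      (hσmono.const_mul hLpos.le) (by simp) hr_pos hMf hL x
    rw [hMf_div] at this
    linarith

theorem stmt17 (σ : ℝ → ℝ) (hσmono : Monotone σ) (hσ0 : σ 0 = 0)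
    (hσpos : ∀ r > (0:ℝ), 0 < σ r)
    (hζmono : StrictMonoOn (fun r => r * σ r) (Set.Ici 0))
    (ζinv : ℝ → ℝ)
    (hζinv : ∀ t : ℝ, 0 ≤ t → 0 ≤ ζinv t ∧ ζinv t * σ (ζinv t) = t)
    (f : EuclideanSpace ℝ (Fin 2) → ℝ)
    (hf : ContDiff ℝ 1 f) (hsupp : HasCompactSupport f) (i : Fin 2)
    (L Mf : ℝ) (hLpos : 0 < L) (hMf0 : 0 ≤ Mf) (hMf : ∀ x, |f x| ≤ Mf)
    (hL : ∀ x y, |fderiv ℝ f x (EuclideanSpace.single i 1)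
                  - fderiv ℝ f y (EuclideanSpace.single i 1)| ≤ L * σ (dist x y)) :
    ∀ x, |fderiv ℝ f x (EuclideanSpace.single i 1)|
      ≤ 2 * σ (ζinv (Mf / L)) * L :=
  stmt17_general σ hσmono hσ0 ζinv hζinv f hf i L Mf hLpos hMf0 hMf hL
end
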